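/- If (x, y) satisfies -√5·y² = x(x-1)(x-κ)(x-2κ+1)(x-2κ) with κ = 81+36√5, and b₂x² + b₁x ≠ 0 and x²(x-2κ)² ≠ 0, then the point (X, Y) = (g(x), h₁(x)·y) satisfies Y² = X³ - X, where g, h₁ and all coefficients are as in the explicit degree-5 cover formulas (a₄ = -45(9+4√5), a₃ = 660(161+72√5), a₂ = -3240(2889+1292√5), a₁ = 1980(51841+23184√5), a₀ = -324(930249+416020√5), b₂ = -100√5(2889+1292√5), b₁ = 1800√5(51841+23184√5), c₅ = -54(9+4√5), c₄ = 1030(161+72√5), c₃ = -7920(2889+1292√5), c₂ = 18780(51841+23184√5), c₁ = 216(930249+416020√5), c₀ = -1944(16692641+7465176√5), d = 1000√5(219602+98209√5)). -/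

import Mathlib

/-! Write g = N/B. Over ℚ(√5) one has B = b₂x(x - 2κ) and
N = (x - κ)p₀², N - B = (x - 2κ + 1)p₁², N + B = (x - 1)p₂², so
g³ - g = N(N - B)(N + B)/B³ = q(x)(p₀p₁p₂)²/(b₂³x⁴(x - 2κ)⁴), with q the quintic of the curve.
The numerator of h₁ is exactly p₀p₁p₂ and b₂³ = -√5·d², so this is h₁(x)²·(-q(x)/√5) = (h₁(x)y)². -/

noncomputable section

def sq5 : ℝ := Real.sqrt 5
def kap : ℝ := 81 + 36 * sq5

def a4 : ℝ := -45 * (9 + 4 * sq5)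
def a3 : ℝ := 660 * (161 + 72 * sq5)
def a2 : ℝ := -3240 * (2889 + 1292 * sq5)
def a1 : ℝ := 1980 * (51841 + 23184 * sq5)
def a0 : ℝ := -324 * (930249 + 416020 * sq5)
def b2 : ℝ := -100 * sq5 * (2889 + 1292 * sq5)
def b1 : ℝ := 1800 * sq5 * (51841 + 23184 * sq5)
def c5 : ℝ := -54 * (9 + 4 * sq5)
def c4 : ℝ := 1030 * (161 + 72 * sq5)
def c3 : ℝ := -7920 * (2889 + 1292 * sq5)
def c2 : ℝ := 18780 * (51841 + 23184 * sq5)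
def c1 : ℝ := 216 * (930249 + 416020 * sq5)
def c0 : ℝ := -1944 * (16692641 + 7465176 * sq5)
def d : ℝ := 1000 * sq5 * (219602 + 98209 * sq5)

/-- The x-coordinate of the degree-5 cover. -/
def g (x : ℝ) : ℝ :=
  (x^5 + a4*x^4 + a3*x^3 + a2*x^2 + a1*x + a0) / (b2*x^2 + b1*x)

/-- The factor h₁ of the y-coordinate h(x,y) = h₁(x)·y of the degree-5 cover. -/
def h1 (x : ℝ) : ℝ :=
  (x^6 + c5*x^5 + c4*x^4 + c3*x^3 + c2*x^2 + c1*x + c0) / (d * x^2 * (x - 2*kap)^2)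

theorem div_pow_three_sub_div {K : Type*} [Field K] (a b : K) :
    (a / b) ^ 3 - a / b = a * (a - b) * (a + b) / b ^ 3 := by
  rcases eq_or_ne b 0 with rfl | hb
  · simp
  · field_simp
    ring

theorem sq5_pos : 0 < sq5 := Real.sqrt_pos.mpr (by norm_num)

theorem sq5_sq : sq5 ^ 2 = 5 := Real.sq_sqrt (by norm_num)

theorem sq5_pow_three : sq5 ^ 3 = 5 * sq5 := by rw [pow_succ, sq5_sq]

theorem b2_pow_three : b2 ^ 3 = -sq5 * d ^ 2 := by
  -- both sides are φ⁵⁴, φ the golden ratio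
  have h : (2889 + 1292 * sq5) ^ 3 = (219602 + 98209 * sq5) ^ 2 := by
    ring_nf
    simp only [sq5_sq, sq5_pow_three]
    ring
  simp only [b2, d]
  linear_combination (-1000000 * sq5 ^ 3) * h

theorem b2_ne_zero : b2 ≠ 0 := by
  have := sq5_pos
  simp only [b2]
  positivity

theorem d_ne_zero : d ≠ 0 := by
  have := sq5_pos
  simp only [d]
  positivity

def p0 (x : ℝ) : ℝ := x^2 - (162 + 72*sq5)*x + (966 + 432*sq5)
def p1 (x : ℝ) : ℝ := x^2 - (122 + 54*sq5)*x - (684 + 306*sq5)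
def p2 (x : ℝ) : ℝ := x^2 - (202 + 90*sq5)*x + (12276 + 5490*sq5)

theorem g_den_eq (x : ℝ) : b2*x^2 + b1*x = b2 * x * (x - 2*kap) := by
  simp only [b2, b1, kap]
  ring_nf
  simp only [sq5_sq, sq5_pow_three]
  ring

theorem g_num_eq (x : ℝ) :
    x^5 + a4*x^4 + a3*x^3 + a2*x^2 + a1*x + a0 = (x - kap) * p0 x ^ 2 := by
  simp only [p0, a4, a3, a2, a1, a0, kap]
  ring_nf
  simp only [sq5_sq, sq5_pow_three]
  ring

theorem g_num_sub_den_eq (x : ℝ) :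
    x^5 + a4*x^4 + a3*x^3 + a2*x^2 + a1*x + a0 - (b2*x^2 + b1*x) =
      (x - (2*kap - 1)) * p1 x ^ 2 := by
  simp only [p1, a4, a3, a2, a1, a0, b2, b1, kap]
  ring_nf
  simp only [sq5_sq, sq5_pow_three]
  ring

theorem g_num_add_den_eq (x : ℝ) :
    x^5 + a4*x^4 + a3*x^3 + a2*x^2 + a1*x + a0 + (b2*x^2 + b1*x) = (x - 1) * p2 x ^ 2 := by
  simp only [p2, a4, a3, a2, a1, a0, b2, b1]
  ring_nf
  simp only [sq5_sq]
  ring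

theorem h1_num_eq (x : ℝ) :
    x^6 + c5*x^5 + c4*x^4 + c3*x^3 + c2*x^2 + c1*x + c0 = p0 x * p1 x * p2 x := by
  simp only [p0, p1, p2, c5, c4, c3, c2, c1, c0]
  ring_nf
  simp only [sq5_sq, sq5_pow_three]
  ring

theorem cover_maps_curve_to_elliptic_general (x y : ℝ)
    (hC : -sq5 * y^2 = x * (x - 1) * (x - kap) * (x - (2*kap - 1)) * (x - 2*kap))
    (hden2 : x^2 * (x - 2*kap)^2 ≠ 0) :
    (h1 x * y)^2 = (g x)^3 - g x := by
  obtain ⟨hx, hx'⟩ : x ≠ 0 ∧ x - 2*kap ≠ 0 := by simpa using hden2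
  rw [g, div_pow_three_sub_div, g_num_sub_den_eq, g_num_add_den_eq, g_num_eq, g_den_eq, h1,
    h1_num_eq]
  field_simp [b2_ne_zero, d_ne_zero]
  linear_combination (p0 x * p1 x * p2 x) ^ 2 * (y ^ 2 * b2_pow_three + d ^ 2 * hC)

/-- Points (x,y) of the genus-2 curve -√5 y² = x(x-1)(x-κ)(x-2κ+1)(x-2κ) are sent by
(x,y) ↦ (g(x), h₁(x)·y) to points of the elliptic curve Y² = X³ - X. -/
theorem cover_maps_curve_to_elliptic (x y : ℝ)
    (hC : -sq5 * y^2 = x * (x - 1) * (x - kap) * (x - (2*kap - 1)) * (x - 2*kap))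
    (hden1 : b2*x^2 + b1*x ≠ 0) (hden2 : x^2 * (x - 2*kap)^2 ≠ 0) :
    (h1 x * y)^2 = (g x)^3 - g x :=
  cover_maps_curve_to_elliptic_general x y hC hden2
end
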